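/- Let ξ be a real irrational number and let α, β be real numbers with 0 < α < 1 and β > 1. Assume there exist integer sequences (u_n)_{n≥1} and (v_n)_{n≥1} such that lim_{n→∞} |u_n ξ − v_n|^{1/n} = α and limsup_{n→∞} |u_n|^{1/n} ≤ β. Then the irrationality exponent satisfies μ(ξ) ≤ 1 − (log β)/(log α). -/

import Mathlib

/-!
Fix `c < α < a < 1` and `b > β`, so that eventually `c ^ n < |u n * ξ - v n| < a ^ n` and
`|u n| ≤ b ^ n`. Given `p / q`, take `n` with `a ^ (n + 1) < 1 / (2q) ≤ a ^ n`. The integer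
`u p - q v = q (u ξ - v) - u (q ξ - p)` (at index `n + 1`) either is nonzero, so `1 ≤ |u p - q v|`
forces `|ξ - p / q| ≥ 1 / (2 q b ^ (n + 1))`, or vanishes, so
`|ξ - p / q| = |u ξ - v| / |u| > (c / b) ^ (n + 1)`. Since `a⁻¹ ^ n ≤ 2q`, both bounds are
`≫ q ^ (-logb a⁻¹ (b / c))`, and this exponent tends to `1 - log β / log α` as `a, b, c → α, β, α`.
-/

open Filter Topology

/-- The irrationality exponent of a real number, as an extended real:
the infimum of all real `μ` such that `|ξ - p/q| > 1/q^μ` for all integers `p, q`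
with `q` sufficiently large (`⊤` if no such real `μ` exists). -/
noncomputable def irrationalityExponent (ξ : ℝ) : EReal :=
  sInf {x : EReal | ∃ μ : ℝ, x = (μ : EReal) ∧
    ∀ᶠ q : ℕ in atTop, ∀ p : ℤ, |ξ - (p : ℝ) / (q : ℝ)| > 1 / (q : ℝ) ^ μ}

theorem irrationalityExponent_le_of_forall_gt {ξ κ : ℝ}
    (h : ∀ μ > κ, ∀ᶠ q : ℕ in atTop, ∀ p : ℤ, |ξ - (p : ℝ) / (q : ℝ)| > 1 / (q : ℝ) ^ μ) :
    irrationalityExponent ξ ≤ κ :=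
  EReal.le_of_forall_lt_iff_le.1 fun μ hμ =>
    sInf_le ⟨μ, rfl, h μ (EReal.coe_lt_coe_iff.1 hμ)⟩

theorem irrationalityExponent_le_of_le_abs_sub_div {ξ κ C : ℝ} (hC : 0 < C)
    (h : ∀ᶠ q : ℕ in atTop, ∀ p : ℤ, C / (q : ℝ) ^ κ ≤ |ξ - (p : ℝ) / (q : ℝ)|) :
    irrationalityExponent ξ ≤ κ := by
  refine irrationalityExponent_le_of_forall_gt fun μ hμ => ?_
  have hgrow : Tendsto (fun q : ℕ => (q : ℝ) ^ (μ - κ)) atTop atTop :=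
    (tendsto_rpow_atTop (sub_pos.2 hμ)).comp tendsto_natCast_atTop_atTop
  filter_upwards [h, hgrow.eventually_gt_atTop C⁻¹, eventually_gt_atTop 0] with q hq hCq hq0 p
  have hq0 : (0 : ℝ) < q := Nat.cast_pos.2 hq0
  calc 1 / (q : ℝ) ^ μ = 1 / ((q : ℝ) ^ κ * (q : ℝ) ^ (μ - κ)) := by
        rw [← Real.rpow_add hq0, add_sub_cancel]
    _ < C / (q : ℝ) ^ κ := by
        rw [div_lt_div_iff₀ (by positivity) (by positivity), one_mul, mul_comm C,
          mul_assoc, lt_mul_iff_one_lt_right (by positivity)]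
        exact (inv_lt_iff_one_lt_mul₀ hC).1 hCq
    _ ≤ |ξ - p / q| := hq p

theorem pow_le_rpow_logb {r x y : ℝ} {n : ℕ} (hr : 1 < r) (hx : 1 ≤ x) (hrn : r ^ n ≤ y) :
    x ^ n ≤ y ^ Real.logb r x := by
  calc x ^ n = (r ^ n) ^ Real.logb r x := by
        rw [← Real.rpow_natCast, ← Real.rpow_natCast, ← Real.rpow_mul (by positivity), mul_comm,
          Real.rpow_mul (by positivity), Real.rpow_logb (by positivity) hr.ne' (by positivity)]
    _ ≤ y ^ Real.logb r x :=
        Real.rpow_le_rpow (by positivity) hrn (Real.logb_nonneg hr hx)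

theorem linear_form_eq_or_one_le (ξ : ℝ) (u v p : ℤ) {q : ℕ} (hq : 0 < q) :
    |u * ξ - v| = |(u : ℝ)| * |ξ - p / q| ∨
      1 ≤ q * |u * ξ - v| + q * |(u : ℝ)| * |ξ - p / q| := by
  have hq : (q : ℝ) ≠ 0 := by positivity
  have hD : ((u * p - q * v : ℤ) : ℝ) = q * (u * ξ - v) - q * u * (ξ - p / q) := by
    push_cast
    field_simp
    ring
  by_cases h : u * p - q * v = 0
  · left
    rw [← abs_mul]
    congr 1
    rw [h, Int.cast_zero, eq_comm, sub_eq_zero] at hD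
    exact mul_left_cancel₀ hq (by rw [hD, mul_assoc])
  · right
    calc (1 : ℝ) ≤ |((u * p - q * v : ℤ) : ℝ)| := by exact_mod_cast Int.one_le_abs h
      _ ≤ |q * (u * ξ - v)| + |q * u * (ξ - p / q)| := by rw [hD]; exact abs_sub _ _
      _ = _ := by simp only [abs_mul, Nat.abs_cast]

theorem div_div_rpow_logb_le_abs_sub_div {ξ b c r : ℝ} {u v p : ℤ} {q n : ℕ} (hq : 0 < q)
    (hc : 0 < c) (hcb : c ≤ b) (hr : 1 < r) (hrn : r ^ n ≤ 2 * q)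
    (hcL : c ^ (n + 1) < |u * ξ - v|) (hL : |u * ξ - v| < 1 / (2 * q))
    (hub : |(u : ℝ)| ≤ b ^ (n + 1)) :
    c / b / (2 * q : ℝ) ^ Real.logb r (b / c) ≤ |ξ - p / q| := by
  have hb : 0 < b := hc.trans_le hcb
  have hY : (b / c) ^ n ≤ (2 * q : ℝ) ^ Real.logb r (b / c) :=
    pow_le_rpow_logb hr ((one_le_div hc).2 hcb) hrn
  have hcases := linear_form_eq_or_one_le ξ u v p hq
  set Y := (2 * q : ℝ) ^ Real.logb r (b / c)
  set X := |ξ - p / q|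
  set L := |(u : ℝ) * ξ - v|
  have hq2 : (0 : ℝ) < 2 * q := by positivity
  rcases hcases with heq | hone
  · calc c / b / Y ≤ c / b / (b / c) ^ n := by gcongr
      _ = c ^ (n + 1) / b ^ (n + 1) := by rw [div_pow, pow_succ', pow_succ']; field_simp
      _ ≤ L / b ^ (n + 1) := by gcongr
      _ ≤ X := by
        rw [div_le_iff₀ (by positivity), heq, mul_comm X]
        exact mul_le_mul_of_nonneg_right hub (abs_nonneg _)
  · have hcq : 2 * q * c ^ (n + 1) < 1 := by
      rw [← lt_div_iff₀' hq2]
      exact hcL.trans hL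
    have hX : 1 < 2 * q * b ^ (n + 1) * X := by
      have hqL : 2 * q * L < 1 := by rwa [← lt_div_iff₀' hq2]
      nlinarith [mul_le_mul_of_nonneg_right hub (abs_nonneg (ξ - p / q))]
    have hbq : 2 * q * b ^ (n + 1) ≤ b / c * Y := by
      calc 2 * q * b ^ (n + 1) ≤ (b / c) ^ (n + 1) := by
            rw [div_pow, le_div_iff₀ (by positivity)]
            nlinarith [pow_pos hb (n + 1)]
        _ ≤ b / c * Y := by rw [pow_succ']; gcongr
    calc c / b / Y = 1 / (b / c * Y) := by field_simp
      _ ≤ 1 / (2 * q * b ^ (n + 1)) := by gcongr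
      _ ≤ X := by
        rw [div_le_iff₀ (by positivity)]
        linarith

theorem eventually_div_div_rpow_logb_le_abs_sub_div {ξ a b c : ℝ} {u v : ℕ → ℤ}
    (hc : 0 < c) (hcb : c ≤ b) (ha0 : 0 < a) (ha : a < 1)
    (h : ∀ᶠ n in atTop, c ^ n < |u n * ξ - v n| ∧ |u n * ξ - v n| < a ^ n ∧ |(u n : ℝ)| ≤ b ^ n) :
    ∀ᶠ q : ℕ in atTop, ∀ p : ℤ,
      c / b / (2 * q : ℝ) ^ Real.logb a⁻¹ (b / c) ≤ |ξ - p / q| := by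
  obtain ⟨N, hN⟩ := eventually_atTop.1 h
  have hsmall : ∀ᶠ q : ℕ in atTop, 1 / 2 / (q : ℝ) ≤ a ^ N :=
    (tendsto_const_div_atTop_nhds_zero_nat _).eventually (ge_mem_nhds (pow_pos ha0 N))
  filter_upwards [hsmall, eventually_gt_atTop 0] with q hqN hq p
  rw [div_div] at hqN
  obtain ⟨n, hlt, hle⟩ := exists_nat_pow_near_of_lt_one (x := 1 / (2 * q : ℝ)) (by positivity)
    (div_le_one_of_le₀ (by linarith [(Nat.one_le_cast (α := ℝ)).2 hq]) (by positivity)) ha0 ha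
  obtain ⟨hcL, hLa, hub⟩ :=
    hN (n + 1) ((pow_lt_pow_iff_right_of_lt_one₀ ha0 ha).1 (hlt.trans_le hqN)).le
  refine div_div_rpow_logb_le_abs_sub_div hq hc hcb ((one_lt_inv₀ ha0).2 ha) ?_ hcL
    (hLa.trans hlt) hub
  rw [inv_pow]
  exact (inv_le_comm₀ (by positivity) (by positivity)).1 (by simpa using hle)

theorem irrationalityExponent_le_logb_of_linear_forms {ξ a b c : ℝ} {u v : ℕ → ℤ}
    (hc : 0 < c) (hcb : c ≤ b) (ha0 : 0 < a) (ha : a < 1)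
    (h : ∀ᶠ n in atTop, c ^ n < |u n * ξ - v n| ∧ |u n * ξ - v n| < a ^ n ∧ |(u n : ℝ)| ≤ b ^ n) :
    irrationalityExponent ξ ≤ Real.logb a⁻¹ (b / c) := by
  have hb : 0 < b := hc.trans_le hcb
  refine irrationalityExponent_le_of_le_abs_sub_div
    (C := c / b / 2 ^ Real.logb a⁻¹ (b / c)) (by positivity) ?_
  filter_upwards [eventually_div_div_rpow_logb_le_abs_sub_div hc hcb ha0 ha h] with q hq p
  rw [div_div, ← Real.mul_rpow zero_le_two (Nat.cast_nonneg q)]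
  exact hq p

theorem eventually_lt_pow_of_rpow_one_div_lt {f : ℕ → ℝ} {a : ℝ} (hf : ∀ n, 0 ≤ f n)
    (h : ∀ᶠ n in atTop, f n ^ (1 / (n : ℝ)) < a) : ∀ᶠ n in atTop, f n < a ^ n := by
  filter_upwards [h, eventually_ne_atTop 0] with n hn hn0
  calc f n = (f n ^ (1 / (n : ℝ))) ^ n := by rw [one_div, Real.rpow_inv_natCast_pow (hf n) hn0]
    _ < a ^ n := pow_lt_pow_left₀ hn (Real.rpow_nonneg (hf n) _) hn0

theorem eventually_pow_lt_of_lt_rpow_one_div {f : ℕ → ℝ} {c : ℝ} (hf : ∀ n, 0 ≤ f n)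
    (hc : 0 ≤ c) (h : ∀ᶠ n in atTop, c < f n ^ (1 / (n : ℝ))) : ∀ᶠ n in atTop, c ^ n < f n := by
  filter_upwards [h, eventually_ne_atTop 0] with n hn hn0
  calc c ^ n < (f n ^ (1 / (n : ℝ))) ^ n := pow_lt_pow_left₀ hn hc hn0
    _ = f n := by rw [one_div, Real.rpow_inv_natCast_pow (hf n) hn0]

theorem tendsto_logb_inv_add_div_sub {α β : ℝ} (hα0 : 0 < α) (hα1 : α < 1) (hβ : 0 < β) :
    Tendsto (fun ε => Real.logb (α + ε)⁻¹ ((β + ε) / (α - ε))) (𝓝 0)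
      (𝓝 (1 - Real.log β / Real.log α)) := by
  have hlog : Real.log α ≠ 0 := (Real.log_neg hα0 hα1).ne
  have hcont : ContinuousAt (fun ε => Real.logb (α + ε)⁻¹ ((β + ε) / (α - ε))) 0 := by
    simp only [Real.logb]
    fun_prop (disch := simp [hα0.ne', hβ.ne', hlog])
  convert hcont.tendsto using 2
  simp only [add_zero, sub_zero, Real.logb, Real.log_div hβ.ne' hα0.ne', Real.log_inv]
  field_simp
  ring

theorem irrationality_exponent_le_of_geometric_general (ξ : ℝ)
    (α β : ℝ) (hα0 : 0 < α) (hα1 : α < 1) (hβ : 1 < β)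
    (u v : ℕ → ℤ)
    (hlim : Tendsto (fun n => |(u n : ℝ) * ξ - (v n : ℝ)| ^ (1 / (n : ℝ))) atTop (𝓝 α))
    (hsup : limsup (fun n => ((|(u n : ℝ)| ^ (1 / (n : ℝ)) : ℝ) : EReal)) atTop ≤ (β : EReal)) :
    irrationalityExponent ξ ≤ ((1 - Real.log β / Real.log α : ℝ) : EReal) := by
  refine ge_of_tendsto (x := 𝓝[>] 0) (EReal.tendsto_coe.2
    ((tendsto_logb_inv_add_div_sub hα0 hα1 (by linarith)).mono_left nhdsWithin_le_nhds)) ?_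
  have hsmall : ∀ᶠ ε in 𝓝[>] (0 : ℝ), 0 < ε ∧ ε < α ∧ ε < 1 - α :=
    eventually_mem_nhdsWithin.and
      (nhdsWithin_le_nhds ((eventually_lt_nhds hα0).and (eventually_lt_nhds (sub_pos.2 hα1))))
  filter_upwards [hsmall] with ε ⟨hε, hεα, hεα'⟩
  have hupper : ∀ᶠ n in atTop, |(u n : ℝ)| ^ (1 / (n : ℝ)) < β + ε :=
    (eventually_lt_of_limsup_lt (hsup.trans_lt (EReal.coe_lt_coe_iff.2 (by linarith)))).mono
      fun n hn => EReal.coe_lt_coe_iff.1 hn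
  refine irrationalityExponent_le_logb_of_linear_forms (u := u) (v := v)
    (by linarith) (by linarith) (by linarith) (by linarith) ?_
  filter_upwards [eventually_pow_lt_of_lt_rpow_one_div (fun n => abs_nonneg _) (by linarith)
      (hlim.eventually_const_lt (by linarith : α - ε < α)),
    eventually_lt_pow_of_rpow_one_div_lt (fun n => abs_nonneg _)
      (hlim.eventually_lt_const (by linarith : α < α + ε)),
    eventually_lt_pow_of_rpow_one_div_lt (fun n => abs_nonneg _) hupper] with n hlow hhigh hu
  exact ⟨hlow, hhigh, hu.le⟩

theorem irrationality_exponent_le_of_geometric (ξ : ℝ) (hξ : Irrational ξ)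
    (α β : ℝ) (hα0 : 0 < α) (hα1 : α < 1) (hβ : 1 < β)
    (u v : ℕ → ℤ)
    (hlim : Tendsto (fun n => |(u n : ℝ) * ξ - (v n : ℝ)| ^ (1 / (n : ℝ))) atTop (𝓝 α))
    (hsup : limsup (fun n => ((|(u n : ℝ)| ^ (1 / (n : ℝ)) : ℝ) : EReal)) atTop ≤ (β : EReal)) :
    irrationalityExponent ξ ≤ ((1 - Real.log β / Real.log α : ℝ) : EReal) :=
  irrationality_exponent_le_of_geometric_general ξ α β hα0 hα1 hβ u v hlim hsup
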